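/- arXiv:2605.13004 — 3 statements merged into one kernel-verified Lean document; each statement's English description precedes it below -/
import Mathlib

section
/- Let h be a probability density on (0,∞) that is nonincreasing, and let 0<m<1. Define ρ_h(x) = (h(|x|) − m(h*ȟ)(x))/(2−m), where ȟ(x)=h(−x) and * denotes convolution. Then ρ_h(x) ≥ 0 for almost every x ∈ ℝ, ∫_ℝ ρ_h(x) dx = 1, and ρ_h(x) = ρ_h(−x) for almost every x; that is, ρ_h is an even probability density on ℝ. -/
open MeasureTheory Set
open scoped ENNReal

/-- The symmetric convolution `(h * ȟ)(x) = ∫_0^∞ h(|x|+u) h(u) du`. -/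
noncomputable def convRefl (h : ℝ → ℝ) (x : ℝ) : ℝ :=
  ∫ u in Ioi (0:ℝ), h (|x| + u) * h u

/-- For a nonincreasing probability density `h` on `(0,∞)` and `0 < m < 1`,
`ρ_h(x) = (h(|x|) − m (h*ȟ)(x)) / (2−m)` is a.e. nonnegative, integrates to `1`,
and is a.e. even: it is an even probability density on `ℝ`. -/
theorem stmt0 (h : ℝ → ℝ) (m : ℝ) (hm0 : 0 < m) (hm1 : m < 1)
    (hmeas : Measurable h) (hnonneg : ∀ x, 0 ≤ h x)
    (hsupp : ∀ x < (0:ℝ), h x = 0)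
    (hmono : AntitoneOn h (Ioi (0:ℝ)))
    (hint : Integrable h) (hprob : ∫ x, h x = 1)
    (ρ : ℝ → ℝ)
    (hρ : ∀ x, ρ x = (h |x| - m * convRefl h x) / (2 - m)) :
    (∀ᵐ x ∂volume, 0 ≤ ρ x) ∧ (∫ x, ρ x = 1) ∧
      (∀ᵐ x ∂volume, ρ x = ρ (-x)) := by
  -- notation
  set H : ℝ → ℝ≥0∞ := fun x => ENNReal.ofReal (h x) with hHdef
  have hH : Measurable H := hmeas.ennreal_ofReal
  -- ∫ h over Ioi 0 equals 1
  have hIoi1 : ∫ x in Ioi (0:ℝ), h x = 1 := by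
    rw [← hprob]
    apply setIntegral_eq_integral_of_ae_compl_eq_zero
    filter_upwards [compl_mem_ae_iff.mpr (Real.volume_singleton (a := (0:ℝ)))] with x hx hx'
    exact hsupp x (lt_of_le_of_ne (not_lt.mp (by simpa using hx')) (by simpa using hx))
  -- lintegral of H over Ioi 0 equals 1
  have hlint1 : ∫⁻ x in Ioi (0:ℝ), H x = 1 := by
    rw [← ofReal_integral_eq_lintegral_ofReal hint.integrableOn
      (Filter.Eventually.of_forall fun x => hnonneg x), hIoi1, ENNReal.ofReal_one]
  -- translation for lintegrals
  have htrans : ∀ u : ℝ, ∫⁻ t in Ioi (0:ℝ), H (t + u) = ∫⁻ s in Ioi u, H s := by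
    intro u
    have hemb : MeasurableEmbedding fun t : ℝ => t + u :=
      (Homeomorph.addRight u).measurableEmbedding
    have hmp : MeasurePreserving (fun t : ℝ => t + u) volume volume :=
      measurePreserving_add_right volume u
    have := hmp.setLIntegral_comp_preimage_emb hemb H (Ioi u)
    rw [show (fun t : ℝ => t + u) ⁻¹' Ioi u = Ioi 0 by ext t; simp] at this
    exact this
  -- G
  set G : ℝ → ℝ≥0∞ := fun u => ∫⁻ s in Ioi u, H s with hGdef
  have hGanti : Antitone G := fun u v huv => lintegral_mono_set (Ioi_subset_Ioi huv)
  have hGmeas : Measurable G := Antitone.measurable hGanti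
  set A : ℝ≥0∞ := ∫⁻ t in Ioi (0:ℝ), ∫⁻ u in Ioi (0:ℝ), H (t + u) * H u with hAdef
  -- swap & translate
  have hA : A = ∫⁻ u in Ioi (0:ℝ), G u * H u := by
    rw [hAdef, lintegral_lintegral_swap
      (((hH.comp (measurable_fst.add measurable_snd)).mul (hH.comp measurable_snd)).aemeasurable)]
    refine setLIntegral_congr_fun measurableSet_Ioi (fun u hu => ?_)
    rw [lintegral_mul_const _ (show Measurable fun t : ℝ => H (t + u) from hH.comp (measurable_add_const u)), htrans u]
  -- J
  set Φ : ℝ → ℝ≥0∞ := fun u => ∫⁻ s in Ioc (0:ℝ) u, H s with hΦdef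
  have hΦmono : Monotone Φ := fun u v huv => lintegral_mono_set (Ioc_subset_Ioc_right huv)
  have hΦmeas : Measurable Φ := Monotone.measurable hΦmono
  set J : ℝ≥0∞ := ∫⁻ u in Ioi (0:ℝ), Φ u * H u with hJdef
  -- A + J = 1
  have hAJ : A + J = 1 := by
    rw [hA, hJdef, ← lintegral_add_left (show Measurable fun u => G u * H u from hGmeas.mul hH)]
    have : ∀ u ∈ Ioi (0:ℝ), G u * H u + Φ u * H u = H u := by
      intro u hu
      rw [← add_mul, hGdef, hΦdef]
      have hdisj : Disjoint (Ioi u) (Ioc (0:ℝ) u) := by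
        rw [Set.disjoint_left]
        rintro a ha ⟨ha0, hau⟩
        exact absurd hau (not_le.mpr ha)
      rw [add_comm (∫⁻ s in Ioi u, H s), ← lintegral_union measurableSet_Ioi hdisj.symm,
        Ioc_union_Ioi_eq_Ioi (le_of_lt hu), hlint1, one_mul]
    rw [setLIntegral_congr_fun measurableSet_Ioi this, hlint1]
  -- J = A by symmetry
  have hJA : J = A := by
    have hkey : ∀ u ∈ Ioi (0:ℝ), Φ u * H u
        = ∫⁻ s in Ioi (0:ℝ), (Iic u).indicator (fun s => H s * H u) s := by
      intro u hu
      rw [lintegral_indicator measurableSet_Iic, Measure.restrict_restrict measurableSet_Iic]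
      have : Iic u ∩ Ioi (0:ℝ) = Ioc (0:ℝ) u := by ext s; simp [and_comm]
      rw [this, hΦdef, lintegral_mul_const _ hH]
    have hswap : (∫⁻ u in Ioi (0:ℝ), ∫⁻ s in Ioi (0:ℝ),
          (Iic u).indicator (fun s => H s * H u) s)
        = ∫⁻ s in Ioi (0:ℝ), ∫⁻ u in Ioi (0:ℝ),
          (Iic u).indicator (fun s => H s * H u) s := by
      apply lintegral_lintegral_swap
      apply Measurable.aemeasurable
      have : (Function.uncurry fun (u s : ℝ) => (Iic u).indicator (fun s => H s * H u) s)
          = fun p : ℝ × ℝ => if p.2 ≤ p.1 then H p.2 * H p.1 else 0 := by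
        funext p; by_cases hp : p.2 ≤ p.1 <;> simp [Function.uncurry, indicator, hp]
      rw [this]
      exact Measurable.ite (measurableSet_le measurable_snd measurable_fst)
        ((hH.comp measurable_snd).mul (hH.comp measurable_fst)) measurable_const
    rw [hJdef, setLIntegral_congr_fun measurableSet_Ioi hkey, hswap]
    rw [hA]
    refine setLIntegral_congr_fun measurableSet_Ioi (fun s hs => ?_)
    calc ∫⁻ u in Ioi (0:ℝ), (Iic u).indicator (fun s' => H s' * H u) s
        = ∫⁻ u in Ioi (0:ℝ), (Ici s).indicator (fun u => H s * H u) u := by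
          refine setLIntegral_congr_fun measurableSet_Ioi
            (fun u hu => ?_)
          by_cases hsu : s ≤ u <;> simp [indicator, hsu]
      _ = ∫⁻ u in Ici s ∩ Ioi (0:ℝ), H s * H u := by
          rw [lintegral_indicator measurableSet_Ici, Measure.restrict_restrict measurableSet_Ici]
      _ = G s * H s := by
          have hset : Ici s ∩ Ioi (0:ℝ) = Ici s :=
            inter_eq_left.mpr (fun u hu => mem_Ioi.mpr (lt_of_lt_of_le (mem_Ioi.mp hs) (mem_Ici.mp hu)))
          rw [hset, lintegral_const_mul _ hH,
            (Measure.restrict_congr_set (μ := volume) (Ioi_ae_eq_Ici (a := s))).symm, mul_comm]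
  -- A = 1/2
  have hAhalf : A = 1/2 := by
    have h2 : (2:ℝ≥0∞) * A = 1 := by rw [two_mul]; nth_rewrite 2 [← hJA]; exact hAJ
    rw [ENNReal.eq_div_iff (by norm_num) (by norm_num), h2]
  -- L and conv
  set L : ℝ → ℝ≥0∞ := fun x => ∫⁻ u in Ioi (0:ℝ), H (x + u) * H u with hLdef
  have hLmeas : Measurable L := by
    have hm : Measurable fun p : ℝ × ℝ => H (p.1 + p.2) * H p.2 :=
      (hH.comp (measurable_fst.add measurable_snd)).mul (hH.comp measurable_snd)
    exact hm.lintegral_prod_right'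
  have hconv : ∀ x, convRefl h x = (L |x|).toReal := by
    intro x
    rw [convRefl, integral_eq_lintegral_of_nonneg_ae
      (Filter.Eventually.of_forall fun u => mul_nonneg (hnonneg _) (hnonneg _))
      ((show Measurable fun u : ℝ => h (|x| + u) * h u from
        ((hmeas.comp (measurable_const_add |x|)).mul hmeas)).aestronglyMeasurable)]
    congr 1
    refine setLIntegral_congr_fun measurableSet_Ioi (fun u _ => ?_)
    exact ENNReal.ofReal_mul (hnonneg _)
  have hLle : ∀ x ∈ Ioi (0:ℝ), L x ≤ H x := by
    intro x hx
    calc L x ≤ ∫⁻ u in Ioi (0:ℝ), H x * H u := by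
          refine setLIntegral_mono (measurable_const.mul hH) fun u hu => ?_
          exact mul_le_mul_left
            (ENNReal.ofReal_le_ofReal (hmono hx (lt_trans hx (show x < x + u by linarith [hu.out])) (show x ≤ x + u by linarith [hu.out]))) _
      _ = H x := by rw [lintegral_const_mul _ hH, hlint1, mul_one]
  have hconvle : ∀ x : ℝ, x ≠ 0 → convRefl h x ≤ h |x| := by
    intro x hx
    rw [hconv]
    have habs : |x| ∈ Ioi (0:ℝ) := abs_pos.mpr hx
    calc (L |x|).toReal ≤ (H |x|).toReal :=
          ENNReal.toReal_mono ENNReal.ofReal_ne_top (hLle _ habs)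
      _ = h |x| := ENNReal.toReal_ofReal (hnonneg _)
  have hconvnn : ∀ x, 0 ≤ convRefl h x := fun x => by rw [hconv]; exact ENNReal.toReal_nonneg
  -- part 1 : a.e. nonneg
  have part1 : ∀ᵐ x ∂(volume : Measure ℝ), 0 ≤ ρ x := by
    filter_upwards [compl_mem_ae_iff.mpr (Real.volume_singleton (a := (0:ℝ)))] with x hx
    have hx0 : x ≠ 0 := by simpa using hx
    rw [hρ x]
    apply div_nonneg _ (by linarith)
    have h1 := hconvle x hx0
    have h2 := hconvnn x
    nlinarith [hnonneg |x|]
  -- part 3 : even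
  have part3 : ∀ᵐ x ∂(volume : Measure ℝ), ρ x = ρ (-x) := by
    refine Filter.Eventually.of_forall fun x => ?_
    rw [hρ x, hρ (-x), abs_neg, convRefl, convRefl, abs_neg]
  -- integrability of h |·|
  have hgIoi : IntegrableOn (fun x => h |x|) (Ioi (0:ℝ)) := by
    refine (hint.integrableOn (s := Ioi 0)).congr_fun (fun x hx => ?_) measurableSet_Ioi
    show h x = h |x|
    rw [abs_of_pos hx]
  have hgIic : IntegrableOn (fun x => h |x|) (Iic (0:ℝ)) := by
    rw [← Measure.map_neg_eq_self (volume : Measure ℝ)]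
    have memb : MeasurableEmbedding fun x : ℝ => -x := (Homeomorph.neg ℝ).measurableEmbedding
    rw [memb.integrableOn_map_iff]
    simp_rw [Function.comp_def, abs_neg, neg_preimage, neg_Iic, neg_zero]
    exact Iff.mpr integrableOn_Ici_iff_integrableOn_Ioi hgIoi
  have hgint : Integrable (fun x => h |x|) := by
    rw [← integrableOn_univ, ← Iic_union_Ioi (a := (0:ℝ))]
    exact hgIic.union hgIoi
  -- integral of h |·|
  have hgval : ∫ x, h |x| = 2 := by rw [integral_comp_abs, hIoi1, mul_one]
  -- conv measurable
  have hconvmeas : Measurable (convRefl h) := by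
    have : convRefl h = fun x => (L |x|).toReal := funext hconv
    rw [this]
    exact (hLmeas.comp measurable_abs).ennreal_toReal
  -- conv integrable
  have hconvint : Integrable (convRefl h) := by
    apply Integrable.mono hgint hconvmeas.aestronglyMeasurable
    filter_upwards [compl_mem_ae_iff.mpr (Real.volume_singleton (a := (0:ℝ)))] with x hx
    have hx0 : x ≠ 0 := by simpa using hx
    rw [Real.norm_eq_abs, Real.norm_eq_abs, abs_of_nonneg (hconvnn x),
      abs_of_nonneg (hnonneg _)]
    exact hconvle x hx0
  -- integral of conv
  have hconvval : ∫ x, convRefl h x = 1 := by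
    have heq : ∫ x, convRefl h x = 2 * ∫ x in Ioi (0:ℝ), (L x).toReal := by
      rw [show (fun x => convRefl h x) = fun x => (fun y => (L y).toReal) |x| from
        funext fun x => hconv x]
      exact integral_comp_abs (f := fun y => (L y).toReal)
    rw [heq]
    have : ∫ x in Ioi (0:ℝ), (L x).toReal = (∫⁻ x in Ioi (0:ℝ), L x).toReal := by
      apply integral_toReal hLmeas.aemeasurable
      rw [ae_restrict_iff' measurableSet_Ioi]
      exact Filter.Eventually.of_forall fun x hx =>
        lt_of_le_of_lt (hLle x hx) ENNReal.ofReal_lt_top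
    rw [this, ← hAdef, hAhalf]
    norm_num
  -- part 2
  have part2 : ∫ x, ρ x = 1 := by
    have : (fun x => ρ x) = fun x => (h |x| - m * convRefl h x) / (2 - m) := funext hρ
    rw [this]
    rw [integral_div, integral_sub hgint (hconvint.const_mul m), integral_const_mul m (convRefl h),
      hgval, hconvval]
    rw [mul_one]
    exact div_self (by linarith)
  exact ⟨part1, part2, part3⟩
end

section
/- Let Y be uniform on (0,1), Z ≥ 0 independent of Y, and suppose X = YZ has density a^{−1}𝟙_{(0,a)} for some a > 0. Then Z = a almost surely. Conversely, if Z = a almost surely then YZ is uniform on (0,a). -/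
open MeasureTheory Set ProbabilityTheory

lemma stmt8_mom (c : ℝ) (hc : 0 < c) (n : ℕ) :
    ∫⁻ x, ENNReal.ofReal (x ^ n) ∂(volume.restrict (Ioo (0:ℝ) c)) =
      ENNReal.ofReal (c ^ (n+1) / (n+1)) := by
  rw [← ofReal_integral_eq_lintegral_ofReal]
  · congr 1
    rw [← integral_Ioc_eq_integral_Ioo, ← intervalIntegral.integral_of_le hc.le,
      integral_pow]
    simp
  · exact (intervalIntegral.intervalIntegrable_pow n (a := 0) (b := c)
      (μ := volume)).1.mono_set Ioo_subset_Ioc_self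
  · exact (ae_restrict_iff' measurableSet_Ioo).2 (Filter.Eventually.of_forall fun x hx =>
      pow_nonneg hx.1.le n)

/-- With `Y` uniform on `(0,1)` independent of `Z ≥ 0`, the product `YZ` is
uniform on `(0,a)` (density `a⁻¹ 𝟙_{(0,a)}`) if and only if `Z = a` almost surely. -/
theorem stmt8 {Ω : Type*} [MeasurableSpace Ω] (μ : Measure Ω) [IsProbabilityMeasure μ]
    (Y Z : Ω → ℝ) (hY : Measurable Y) (hZ : Measurable Z)
    (hunif : Measure.map Y μ = volume.restrict (Ioo (0:ℝ) 1))
    (hindep : IndepFun Y Z μ)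
    (hpos : ∀ᵐ ω ∂μ, 0 ≤ Z ω)
    (a : ℝ) (ha : 0 < a) :
    (Measure.map (fun ω => Y ω * Z ω) μ =
        (ENNReal.ofReal a)⁻¹ • volume.restrict (Ioo (0:ℝ) a) →
      ∀ᵐ ω ∂μ, Z ω = a) ∧
    ((∀ᵐ ω ∂μ, Z ω = a) →
      Measure.map (fun ω => Y ω * Z ω) μ =
        (ENNReal.ofReal a)⁻¹ • volume.restrict (Ioo (0:ℝ) a)) := by
  have hXm : Measurable fun ω => Y ω * Z ω := hY.mul hZ
  constructor
  · intro hX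
    have hY01 : ∀ᵐ ω ∂μ, Y ω ∈ Ioo (0:ℝ) 1 := by
      have : μ (Y ⁻¹' (Ioo (0:ℝ) 1)ᶜ) = 0 := by
        rw [← Measure.map_apply hY measurableSet_Ioo.compl, hunif,
          Measure.restrict_apply measurableSet_Ioo.compl]
        simp
      exact this
    have key : ∀ n : ℕ,
        ENNReal.ofReal (1 / (n+1)) * ∫⁻ ω, ENNReal.ofReal (Z ω ^ n) ∂μ =
          ENNReal.ofReal (a ^ n / (n+1)) := by
      intro n
      have hmeasn : Measurable fun x : ℝ => ENNReal.ofReal (x ^ n) :=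
        ENNReal.measurable_ofReal.comp (measurable_id.pow_const n)
      have hind : IndepFun (fun ω => ENNReal.ofReal (Y ω ^ n))
          (fun ω => ENNReal.ofReal (Z ω ^ n)) μ :=
        hindep.comp hmeasn hmeasn
      have hXn : ∫⁻ ω, ENNReal.ofReal ((Y ω * Z ω) ^ n) ∂μ =
          (∫⁻ ω, ENNReal.ofReal (Y ω ^ n) ∂μ) * ∫⁻ ω, ENNReal.ofReal (Z ω ^ n) ∂μ := by
        have h := lintegral_mul_eq_lintegral_mul_lintegral_of_indepFun (μ := μ)
          (f := fun ω => ENNReal.ofReal (Y ω ^ n)) (g := fun ω => ENNReal.ofReal (Z ω ^ n))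
          (hmeasn.comp hY) (hmeasn.comp hZ) hind
        rw [← h]
        refine lintegral_congr_ae (hY01.mono fun ω hω => ?_)
        simp only [Pi.mul_apply, mul_pow]
        rw [ENNReal.ofReal_mul (pow_nonneg hω.1.le n)]
      have hXval : ∫⁻ ω, ENNReal.ofReal ((Y ω * Z ω) ^ n) ∂μ =
          ENNReal.ofReal (a ^ n / (n+1)) := by
        rw [← lintegral_map (g := fun ω => Y ω * Z ω)
            (f := fun x : ℝ => ENNReal.ofReal (x ^ n)) hmeasn hXm, hX,
          lintegral_smul_measure, stmt8_mom a ha n]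
        rw [show a ^ (n+1) / ((n:ℝ)+1) = a * (a ^ n / ((n:ℝ)+1)) by ring,
          ENNReal.ofReal_mul ha.le, smul_eq_mul, ← mul_assoc,
          ENNReal.inv_mul_cancel (by simpa using ha) ENNReal.ofReal_ne_top, one_mul]
      have hYval : ∫⁻ ω, ENNReal.ofReal (Y ω ^ n) ∂μ = ENNReal.ofReal (1 / (n+1)) := by
        rw [← lintegral_map (g := Y) (f := fun x : ℝ => ENNReal.ofReal (x ^ n)) hmeasn hY,
          hunif, stmt8_mom 1 one_pos n, one_pow]
      rw [← hYval, ← hXn, hXval]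
    have hne : ∀ n : ℕ, (ENNReal.ofReal (1 / ((n:ℝ)+1)) ≠ 0) := by
      intro n
      simp only [ne_eq, ENNReal.ofReal_eq_zero, not_le]
      positivity
    have hL1 : ∫⁻ ω, ENNReal.ofReal (Z ω) ∂μ = ENNReal.ofReal a := by
      have h1 := key 1
      have e1 : ENNReal.ofReal (a ^ 1 / (((1:ℕ):ℝ)+1)) =
          ENNReal.ofReal (1 / (((1:ℕ):ℝ)+1)) * ENNReal.ofReal a := by
        rw [← ENNReal.ofReal_mul (by positivity)]
        congr 1
        push_cast; ring
      rw [e1] at h1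
      have h2 := (ENNReal.mul_right_inj (hne 1) ENNReal.ofReal_ne_top).1 h1
      simpa using h2
    have hL2 : ∫⁻ ω, ENNReal.ofReal (Z ω ^ 2) ∂μ = ENNReal.ofReal (a ^ 2) := by
      have h1 := key 2
      have e1 : ENNReal.ofReal (a ^ 2 / (((2:ℕ):ℝ)+1)) =
          ENNReal.ofReal (1 / (((2:ℕ):ℝ)+1)) * ENNReal.ofReal (a ^ 2) := by
        rw [← ENNReal.ofReal_mul (by positivity)]
        congr 1
        push_cast; ring
      rw [e1] at h1
      exact (ENNReal.mul_right_inj (hne 2) ENNReal.ofReal_ne_top).1 h1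
    have hZint : Integrable Z μ := by
      refine ⟨hZ.aestronglyMeasurable, ?_⟩
      rw [HasFiniteIntegral]
      calc ∫⁻ ω, (‖Z ω‖₊ : ENNReal) ∂μ = ∫⁻ ω, ENNReal.ofReal (Z ω) ∂μ :=
            lintegral_congr_ae (hpos.mono fun ω h => Real.enorm_eq_ofReal h)
        _ = ENNReal.ofReal a := hL1
        _ < ⊤ := ENNReal.ofReal_lt_top
    have hZ2int : Integrable (fun ω => Z ω ^ 2) μ := by
      refine ⟨(hZ.pow_const 2).aestronglyMeasurable, ?_⟩
      rw [HasFiniteIntegral]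
      calc ∫⁻ ω, (‖Z ω ^ 2‖₊ : ENNReal) ∂μ = ∫⁻ ω, ENNReal.ofReal (Z ω ^ 2) ∂μ :=
            lintegral_congr (fun ω => Real.enorm_eq_ofReal (sq_nonneg _))
        _ = ENNReal.ofReal (a ^ 2) := hL2
        _ < ⊤ := ENNReal.ofReal_lt_top
    have hiZ : ∫ ω, Z ω ∂μ = a := by
      rw [integral_eq_lintegral_of_nonneg_ae hpos hZ.aestronglyMeasurable, hL1,
        ENNReal.toReal_ofReal ha.le]
    have hiZ2 : ∫ ω, Z ω ^ 2 ∂μ = a ^ 2 := by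
      rw [integral_eq_lintegral_of_nonneg_ae (Filter.Eventually.of_forall fun ω => sq_nonneg _)
        (hZ.pow_const 2).aestronglyMeasurable, hL2,
        ENNReal.toReal_ofReal (sq_nonneg a)]
    have hint1 : Integrable (fun ω => Z ω ^ 2 - 2 * a * Z ω) μ :=
      hZ2int.sub (hZint.const_mul (2 * a))
    have hfun : (fun ω => (Z ω - a) ^ 2) = fun ω => Z ω ^ 2 - 2 * a * Z ω + a ^ 2 := by
      funext ω; ring
    have hint : Integrable (fun ω => (Z ω - a) ^ 2) μ := by
      rw [hfun]; exact hint1.add (integrable_const _)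
    have hzero : ∫ ω, (Z ω - a) ^ 2 ∂μ = 0 := by
      rw [hfun, integral_add hint1 (integrable_const _),
        integral_sub hZ2int (hZint.const_mul (2 * a)), integral_const_mul, hiZ, hiZ2,
        integral_const]
      simp only [measure_univ, ENNReal.toReal_one, smul_eq_mul, one_mul, probReal_univ]
      ring
    have hae := (integral_eq_zero_iff_of_nonneg_ae
      (Filter.Eventually.of_forall fun ω => sq_nonneg (Z ω - a)) hint).1 hzero
    filter_upwards [hae] with ω hω
    have h0 := pow_eq_zero_iff (n := 2) (by norm_num) |>.1 hω
    linarith [h0]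
  · intro hZa
    have h1 : Measure.map (fun ω => Y ω * Z ω) μ = Measure.map (fun ω => Y ω * a) μ :=
      Measure.map_congr (hZa.mono fun ω h => by simp only [h])
    rw [h1, show (fun ω => Y ω * a) = (· * a) ∘ Y from rfl,
      ← Measure.map_map (measurable_mul_const a) hY, hunif,
      show Ioo (0:ℝ) 1 = (· * a) ⁻¹' (Ioo 0 a) by
        rw [preimage_mul_const_Ioo₀ _ _ ha]; simp [div_self ha.ne'],
      ← Measure.restrict_map (measurable_mul_const a) measurableSet_Ioo,
      Real.map_volume_mul_right ha.ne', Measure.restrict_smul,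
      abs_of_pos (inv_pos.2 ha), ENNReal.ofReal_inv_of_pos ha]
end

section
/- Let h(t) = a^{−1}𝟙_{(0,a)}(t) be the uniform density on (0,a), with Fourier transform ĥ(ω) = ∫_0^a e^{−iωt} a^{−1} dt = e^{−iaω/2} sinc(aω/2). For 0<m<1 define Q(ω₁,ω₂) = ĥ(−ω₁)ĥ(−ω₂) + ĥ(ω₁+ω₂){ĥ(−ω₁) + ĥ(−ω₂) − 2m ĥ(−ω₁)ĥ(−ω₂)}. Then Im Q(ω₁,ω₂) = 0 for all (ω₁,ω₂) ∈ ℝ². -/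
open MeasureTheory Set

/-- Fourier transform of the uniform density on `(0,a)`:
`ĥ(ω) = ∫_0^a e^{−iωt} a⁻¹ dt`. -/
noncomputable def ftUnif (a : ℝ) (ω : ℝ) : ℂ :=
  ∫ t in Ioo (0:ℝ) a, Complex.exp (-Complex.I * ω * t) / (a : ℂ)

lemma ftUnif_zero (a : ℝ) (ha : 0 < a) : ftUnif a 0 = 1 := by
  simp [ftUnif, Real.volume_Ioo, ENNReal.toReal_ofReal ha.le]
  rw [max_eq_left ha.le]
  exact mul_inv_cancel₀ (by exact_mod_cast ha.ne')

lemma ftUnif_ne (a ω : ℝ) (ha : 0 < a) (hω : ω ≠ 0) :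
    ftUnif a ω = ((Real.sin (a*ω)/(a*ω) : ℝ) : ℂ) + Complex.I * ((Real.cos (a*ω)-1)/(a*ω) : ℝ) := by
  have hc : (-Complex.I * ω) ≠ 0 := by
    simp [Complex.ext_iff, hω]
  have h1 : ftUnif a ω = (∫ t in (0:ℝ)..a, Complex.exp ((-Complex.I * ω) * t)) / a := by
    rw [ftUnif, intervalIntegral.integral_of_le ha.le, ← MeasureTheory.integral_Ioc_eq_integral_Ioo]
    rw [MeasureTheory.integral_div]
  rw [h1, integral_exp_mul_complex hc]
  have he : Complex.exp (-Complex.I * ↑ω * ↑a) = Real.cos (a*ω) - Complex.I * Real.sin (a*ω) := by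
    have h := Complex.exp_mul_I (↑(-(a*ω)) : ℂ)
    rw [show ((↑(-(a*ω)):ℂ) * Complex.I) = -Complex.I * ↑ω * ↑a by push_cast; ring] at h
    rw [h, ← Complex.ofReal_cos, ← Complex.ofReal_sin]
    rw [Real.cos_neg, Real.sin_neg]; push_cast; ring
  rw [he]
  have haω : ((a : ℂ)*ω) ≠ 0 := by
    exact_mod_cast mul_ne_zero (show (a:ℂ) ≠ 0 by exact_mod_cast ha.ne') (show (ω:ℂ) ≠ 0 by exact_mod_cast hω)
  rw [div_eq_iff (show (a:ℂ) ≠ 0 by exact_mod_cast ha.ne'), div_eq_iff hc]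
  push_cast
  field_simp
  ring_nf
  simp [Complex.ext_iff]
  have hk : a * ω * a⁻¹ * ω⁻¹ = 1 := by field_simp [ha.ne', hω]
  exact ⟨by linear_combination (-((Complex.cos (↑a * ↑ω)).re + (Complex.sin (↑a * ↑ω)).im - 1)) * hk,
    by linear_combination (-((Complex.cos (↑a * ↑ω)).im - (Complex.sin (↑a * ↑ω)).re)) * hk⟩

/-- Phase–sinc factorization of `ftUnif`. -/
lemma ftUnif_eq' (a ω : ℝ) (ha : 0 < a) :
    ftUnif a ω = Complex.exp ((-(a*ω/2) : ℝ) * Complex.I) *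
      ((if ω = 0 then (1:ℝ) else Real.sin (a*ω/2)/(a*ω/2)) : ℝ) := by
  by_cases hω : ω = 0
  · subst hω; simp [ftUnif_zero a ha]
  · rw [ftUnif_ne a ω ha hω, if_neg hω]
    have hθ : a * ω / 2 ≠ 0 := div_ne_zero (mul_ne_zero ha.ne' hω) two_ne_zero
    have hA : a * ω ≠ 0 := mul_ne_zero ha.ne' hω
    apply Complex.ext
    · simp only [Complex.add_re, Complex.mul_re, Complex.ofReal_re, Complex.ofReal_im,
        Complex.I_re, Complex.I_im, Complex.exp_ofReal_mul_I_re, Complex.exp_ofReal_mul_I_im]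
      rw [Real.cos_neg, Real.sin_neg]
      rw [show a * ω = 2 * (a * ω / 2) by ring, Real.sin_two_mul]
      field_simp
      ring
    · simp only [Complex.add_im, Complex.mul_im, Complex.ofReal_re, Complex.ofReal_im,
        Complex.I_re, Complex.I_im, Complex.exp_ofReal_mul_I_re, Complex.exp_ofReal_mul_I_im]
      rw [Real.cos_neg, Real.sin_neg]
      rw [show a * ω = 2 * (a * ω / 2) by ring, Real.cos_two_mul]
      field_simp
      linear_combination (2:ℝ) * Real.sin_sq_add_cos_sq (a * ω / 2)

/-- Imaginary part of the branching numerator, given the sinc identity. -/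
lemma imQ (θ₁ θ₂ s₁ s₂ s₁₂ m : ℝ)
    (h : s₁ * s₂ * Real.sin (θ₁ + θ₂) = s₁₂ * (s₁ * Real.sin θ₂ + s₂ * Real.sin θ₁)) :
    ((Complex.exp ((θ₁ : ℝ) * Complex.I) * (s₁:ℝ)) * (Complex.exp ((θ₂ : ℝ) * Complex.I) * (s₂:ℝ))
      + (Complex.exp ((-(θ₁+θ₂) : ℝ) * Complex.I) * (s₁₂:ℝ)) *
          ((Complex.exp ((θ₁ : ℝ) * Complex.I) * (s₁:ℝ)) + (Complex.exp ((θ₂ : ℝ) * Complex.I) * (s₂:ℝ))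
            - 2 * m * (Complex.exp ((θ₁ : ℝ) * Complex.I) * (s₁:ℝ)) * (Complex.exp ((θ₂ : ℝ) * Complex.I) * (s₂:ℝ)))).im
      = 0 := by
  rw [Real.sin_add] at h
  simp only [Complex.add_im, Complex.add_re, Complex.mul_im, Complex.mul_re,
    Complex.sub_im, Complex.sub_re, Complex.ofReal_re, Complex.ofReal_im,
    Complex.re_ofNat, Complex.im_ofNat,
    Complex.exp_ofReal_mul_I_re, Complex.exp_ofReal_mul_I_im,
    Real.sin_neg, Real.cos_neg, Real.sin_add, Real.cos_add]
  linear_combination h - s₁₂ * s₁ * Real.sin θ₂ * Real.sin_sq_add_cos_sq θ₁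
    - s₁₂ * s₂ * Real.sin θ₁ * Real.sin_sq_add_cos_sq θ₂

/-- For the uniform density on `(0,a)` and any `0<m<1`, the branching
numerator `Q(ω₁,ω₂) = ĥ(−ω₁)ĥ(−ω₂) + ĥ(ω₁+ω₂){ĥ(−ω₁)+ĥ(−ω₂) − 2m ĥ(−ω₁)ĥ(−ω₂)}`
has vanishing imaginary part everywhere. -/
theorem stmt10 (a m : ℝ) (ha : 0 < a) (hm0 : 0 < m) (hm1 : m < 1) :
    ∀ ω₁ ω₂ : ℝ,
      (ftUnif a (-ω₁) * ftUnif a (-ω₂)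
        + ftUnif a (ω₁ + ω₂) *
            (ftUnif a (-ω₁) + ftUnif a (-ω₂)
              - 2 * m * ftUnif a (-ω₁) * ftUnif a (-ω₂))).im = 0 := by
  intro ω₁ ω₂
  rw [ftUnif_eq' a (-ω₁) ha, ftUnif_eq' a (-ω₂) ha, ftUnif_eq' a (ω₁+ω₂) ha]
  rw [show -(a * -ω₁ / 2) = a * ω₁ / 2 by ring, show -(a * -ω₂ / 2) = a * ω₂ / 2 by ring,
    show -(a * (ω₁ + ω₂) / 2) = -(a * ω₁ / 2 + a * ω₂ / 2) by ring,
    show a * (ω₁ + ω₂) / 2 = a * ω₁ / 2 + a * ω₂ / 2 by ring,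
    show a * -ω₁ / 2 = -(a * ω₁ / 2) by ring, show a * -ω₂ / 2 = -(a * ω₂ / 2) by ring]
  have hs₁ : (if -ω₁ = 0 then (1:ℝ) else Real.sin (-(a*ω₁/2))/(-(a*ω₁/2)))
      = (if ω₁ = 0 then (1:ℝ) else Real.sin (a*ω₁/2)/(a*ω₁/2)) := by
    by_cases h : ω₁ = 0 <;> simp [h, Real.sin_neg, neg_div_neg_eq]
  have hs₂ : (if -ω₂ = 0 then (1:ℝ) else Real.sin (-(a*ω₂/2))/(-(a*ω₂/2)))
      = (if ω₂ = 0 then (1:ℝ) else Real.sin (a*ω₂/2)/(a*ω₂/2)) := by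
    by_cases h : ω₂ = 0 <;> simp [h, Real.sin_neg, neg_div_neg_eq]
  rw [hs₁, hs₂]
  set θ₁ := a * ω₁ / 2 with hθ₁
  set θ₂ := a * ω₂ / 2 with hθ₂
  apply imQ θ₁ θ₂ _ _ _ m
  -- the sinc identity
  by_cases h1 : ω₁ = 0
  · have e1 : θ₁ = 0 := by simp [hθ₁, h1]
    by_cases h2 : ω₂ = 0
    · have e2 : θ₂ = 0 := by simp [hθ₂, h2]
      simp [h1, h2, e1, e2]
    · have h12 : ω₁ + ω₂ ≠ 0 := by simpa [h1] using h2
      simp only [if_pos h1, if_neg h2, if_neg h12, e1, zero_add, Real.sin_zero]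
      ring
  · have e1 : θ₁ ≠ 0 := by
      simp only [hθ₁]; exact div_ne_zero (mul_ne_zero ha.ne' h1) two_ne_zero
    by_cases h2 : ω₂ = 0
    · have e2 : θ₂ = 0 := by simp [hθ₂, h2]
      have h12 : ω₁ + ω₂ ≠ 0 := by simpa [h2] using h1
      simp only [if_neg h1, if_pos h2, if_neg h12, e2, add_zero, Real.sin_zero]
      ring
    · have e2 : θ₂ ≠ 0 := by
        simp only [hθ₂]; exact div_ne_zero (mul_ne_zero ha.ne' h2) two_ne_zero
      by_cases h12 : ω₁ + ω₂ = 0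
      · have hω : ω₂ = -ω₁ := by linarith
        have e12 : θ₂ = -θ₁ := by rw [hθ₁, hθ₂, hω]; ring
        simp only [if_neg h1, if_neg h2, if_pos h12, e12, add_neg_cancel,
          Real.sin_zero, Real.sin_neg, one_mul]
        field_simp
        all_goals ring
      · have e12 : θ₁ + θ₂ ≠ 0 := by
          rw [hθ₁, hθ₂, show a * ω₁ / 2 + a * ω₂ / 2 = a * (ω₁ + ω₂) / 2 by ring]
          exact div_ne_zero (mul_ne_zero ha.ne' h12) two_ne_zero
        simp only [if_neg h1, if_neg h2, if_neg h12]
        field_simp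
        ring
end
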